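/- arXiv:1710.04602 — 9 statements merged into one kernel-verified Lean document; each statement's English description precedes it below -/
import Mathlib

section
/- Let P(X,Y,Z) = X + 1/X + Y + 1/Y + Z + 1/Z - 2. If X, Y lie on the unit circle, Z is a complex number with |Z| > 1, and P(X,Y,Z) = 0, then Z is a real number satisfying Z > 1, and moreover Re(X) + Re(Y) < 0 and Z = 1 - Re(X) - Re(Y) + sqrt((1 - Re(X) - Re(Y))^2 - 1). -/
/-!
On the unit circle `X⁻¹ = conj X`, so the equation says `Z + Z⁻¹ = 2t` with the real number
`t = 1 - Re X - Re Y ≥ -1`. Since `Im (Z + Z⁻¹) = Im Z · (1 - 1/|Z|²)` and `|Z| ≠ 1`, `Z` is real.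
A real `z` with `|z| > 1` has `|z + z⁻¹| > 2` with the sign of `z`, so `t ≥ -1` forces `z > 1`
and `t > 1`; then `z` is the larger root of `z² - 2tz + 1 = 0`.
-/

open Complex

namespace Complex

lemma add_inv_eq_two_re_of_norm_eq_one {z : ℂ} (hz : ‖z‖ = 1) : z + z⁻¹ = (2 * z.re : ℝ) := by
  rw [inv_eq_conj hz, add_conj]

lemma im_eq_zero_of_im_add_inv_eq_zero {z : ℂ} (hz : ‖z‖ ≠ 1) (h : (z + z⁻¹).im = 0) :
    z.im = 0 := by
  rcases eq_or_ne z 0 with rfl | hz0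
  · rfl
  have hn0 : normSq z ≠ 0 := (normSq_pos.mpr hz0).ne'
  have hn : normSq z ≠ 1 := by
    rwa [normSq_eq_norm_sq, Ne, pow_eq_one_iff_of_nonneg (norm_nonneg z) two_ne_zero]
  rw [add_im, inv_im] at h
  have hmul : z.im * (normSq z - 1) = 0 := by
    field_simp at h
    linear_combination h
  exact (mul_eq_zero.mp hmul).resolve_right (sub_ne_zero.mpr hn)

end Complex

lemma one_lt_of_add_inv_eq {z t : ℝ} (hz : 1 < |z|) (ht : -1 ≤ t) (h : z + z⁻¹ = 2 * t) :
    1 < z := by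
  rcases lt_abs.mp hz with hpos | hneg
  · exact hpos
  · have hz0 : z ≠ 0 := by linarith
    have hquad : z ^ 2 + 1 = 2 * t * z := by
      field_simp at h
      linear_combination h
    nlinarith

lemma two_lt_add_inv_self {z : ℝ} (hz : 1 < z) : 2 < z + z⁻¹ := by
  have hz0 : 0 < z := by linarith
  have : z + z⁻¹ - 2 = (z - 1) ^ 2 / z := by
    field_simp
    ring
  have : 0 < (z - 1) ^ 2 / z := by positivity
  linarith

lemma eq_add_sqrt_of_add_inv_eq {z t : ℝ} (hz : 1 < z) (h : z + z⁻¹ = 2 * t) :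
    z = t + √(t ^ 2 - 1) := by
  have hz0 : 0 < z := by linarith
  have hsq : t ^ 2 - 1 = ((z - z⁻¹) / 2) ^ 2 := by
    rw [show t = (z + z⁻¹) / 2 by linarith]
    field_simp
    ring
  have hpos : 0 ≤ (z - z⁻¹) / 2 := by
    have : z⁻¹ < 1 := inv_lt_one_of_one_lt₀ hz
    linarith
  rw [hsq, Real.sqrt_sq hpos]
  linear_combination (1 / 2 : ℝ) * h

theorem stmt_0 (X Y Z : ℂ) (hX : ‖X‖ = 1) (hY : ‖Y‖ = 1)
    (hZ : 1 < ‖Z‖)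
    (heq : X + X⁻¹ + Y + Y⁻¹ + Z + Z⁻¹ - 2 = 0) :
    Z.im = 0 ∧ 1 < Z.re ∧ X.re + Y.re < 0 ∧
      Z = ((1 - X.re - Y.re + Real.sqrt ((1 - X.re - Y.re) ^ 2 - 1) : ℝ) : ℂ) := by
  have hZt : Z + Z⁻¹ = (2 * (1 - X.re - Y.re) : ℝ) := by
    have hXr := add_inv_eq_two_re_of_norm_eq_one hX
    have hYr := add_inv_eq_two_re_of_norm_eq_one hY
    push_cast at hXr hYr ⊢
    linear_combination heq - hXr - hYr
  set t := 1 - X.re - Y.re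
  have hZim : Z.im = 0 :=
    im_eq_zero_of_im_add_inv_eq_zero hZ.ne' (by rw [hZt, ofReal_im])
  lift Z to ℝ using hZim with z
  have hzt : z + z⁻¹ = 2 * t := by exact_mod_cast hZt
  have ht : -1 ≤ t := by linarith [re_le_norm X, re_le_norm Y]
  have hz : 1 < z := one_lt_of_add_inv_eq (by rwa [norm_real, Real.norm_eq_abs] at hZ) ht hzt
  have htz : 1 < t := by linarith [two_lt_add_inv_self hz]
  refine ⟨ofReal_im z, by rwa [ofReal_re], by linarith, ?_⟩
  exact congrArg _ (eq_add_sqrt_of_add_inv_eq hz hzt)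
end

section
/- For X, Y on the complex unit circle, the equation X + 1/X + Y + 1/Y + Z + 1/Z - 2 = 0 with real Z > 1 has Z varying in the interval (1, 3 + 2*sqrt(2)], and Z = 3 + 2*sqrt(2) is attained only at (X,Y) = (-1,-1). -/
/-!
On the unit circle `w⁻¹ = conj w`, so `w + w⁻¹ = 2 Re w ≥ -2`. The equation then gives
`Z + Z⁻¹ ≤ 6`, i.e. `Z ≤ 3 + 2√2`, the larger root of `z² - 6z + 1`. Equality forces
`Re X = Re Y = -1`, and a unit complex number with real part `-1` is `-1`.
-/

open Complex

lemma Complex.neg_one_le_re_of_norm_eq_one {w : ℂ} (hw : ‖w‖ = 1) : -1 ≤ w.re := by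
  simpa [hw] using neg_le_of_abs_le (abs_re_le_norm w)

lemma Complex.eq_neg_one_of_norm_eq_one_of_re_eq {w : ℂ} (hw : ‖w‖ = 1) (hre : w.re = -1) :
    w = -1 := by
  have him : w.im = 0 := by
    have hsq := sq_norm_sub_sq_re w
    rw [hw, hre] at hsq
    exact pow_eq_zero_iff two_ne_zero |>.mp (by linarith)
  exact Complex.ext (by simp [hre]) (by simp [him])

lemma Real.inv_three_add_two_mul_sqrt_two : (3 + 2 * √2)⁻¹ = 3 - 2 * √2 := by
  refine inv_eq_of_mul_eq_one_right ?_
  linear_combination (-4) * Real.mul_self_sqrt (show (0 : ℝ) ≤ 2 by norm_num)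

lemma Real.le_three_add_two_mul_sqrt_two_of_add_inv_le_six {z : ℝ} (hz : 0 < z)
    (h : z + z⁻¹ ≤ 6) : z ≤ 3 + 2 * √2 := by
  have hquad : z ^ 2 - 6 * z + 1 ≤ 0 := by
    have := mul_le_mul_of_nonneg_left h hz.le
    rw [mul_add, mul_inv_cancel₀ hz.ne'] at this
    nlinarith
  nlinarith [Real.sq_sqrt (show (0 : ℝ) ≤ 2 by norm_num), Real.sqrt_nonneg 2]

theorem stmt_1 (X Y : ℂ) (Z : ℝ) (hX : ‖X‖ = 1) (hY : ‖Y‖ = 1)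
    (hZ : 1 < Z)
    (heq : X + X⁻¹ + Y + Y⁻¹ + (Z : ℂ) + (Z : ℂ)⁻¹ = 2) :
    Z ∈ Set.Ioc 1 (3 + 2 * Real.sqrt 2) ∧
      (Z = 3 + 2 * Real.sqrt 2 → X = -1 ∧ Y = -1) := by
  rw [inv_eq_conj hX, inv_eq_conj hY, ← ofReal_inv] at heq
  have hre : X.re + X.re + Y.re + Y.re + (Z + Z⁻¹) = 2 := by
    simpa [add_assoc] using congrArg re heq
  have hXre := neg_one_le_re_of_norm_eq_one hX
  have hYre := neg_one_le_re_of_norm_eq_one hY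
  refine ⟨⟨hZ, Real.le_three_add_two_mul_sqrt_two_of_add_inv_le_six (by linarith) (by linarith)⟩,
    fun hZeq => ?_⟩
  have h6 : Z + Z⁻¹ = 6 := by
    rw [hZeq, Real.inv_three_add_two_mul_sqrt_two]
    ring
  exact ⟨eq_neg_one_of_norm_eq_one_of_re_eq hX (by linarith),
    eq_neg_one_of_norm_eq_one_of_re_eq hY (by linarith)⟩
end

section
/- On the elliptic curve V^2 + k*U*V = U*(U-1)^2 over the field Q(Z) with k = Z + 1/Z - 2, the point A = (Z, Z-1) satisfies 2A = (1,0) and 4A = (0,0); in particular A is a point of order 8. -/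
open WeierstrassCurve

noncomputable def E18Curve : WeierstrassCurve.Affine (RatFunc ℚ) :=
  { a₁ := RatFunc.X + RatFunc.X⁻¹ - 2, a₂ := -2, a₃ := 0, a₄ := 1, a₆ := 0 }

/-!
Everything is a tangent-line computation. The tangent at `A = (z, z - 1)` has slope `2 - z⁻¹` and
gives `2A = (1, 0)`; the tangent at `(1, 0)` is horizontal and gives `4A = (0, 0)`; and the tangent
at `(0, 0)` is vertical, so `8A = 0`. As `4A ≠ 0`, the order of `A` is `8`. All of this holds over
any field, as long as `z ≠ 0` and `z² ≠ 1`.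
-/

namespace WeierstrassCurve.Affine.Point

variable {F : Type*} [Field F] [DecidableEq F] {W : Affine F}

lemma two_nsmul_some_of_Y_ne {x y x' y' : F} {h : W.Nonsingular x y} {h' : W.Nonsingular x' y'}
    (hy : y ≠ W.negY x y) (hx' : W.addX x x (W.slope x x y y) = x')
    (hy' : W.addY x x y (W.slope x x y y) = y') :
    2 • some x y h = some x' y' h' := by
  subst hx' hy'
  rw [two_nsmul, add_self_of_Y_ne hy]

lemma two_nsmul_some_of_Y_eq {x y : F} {h : W.Nonsingular x y} (hy : y = W.negY x y) :
    2 • some x y h = 0 := by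
  rw [two_nsmul, add_self_of_Y_eq hy]

end WeierstrassCurve.Affine.Point

section EightTorsionCurve

open Affine Affine.Point

variable {K : Type*} [Field K]

/-- The curve `V² + (z + z⁻¹ - 2) U V = U (U - 1)²`. -/
def eightTorsionCurve (z : K) : Affine K :=
  { a₁ := z + z⁻¹ - 2, a₂ := -2, a₃ := 0, a₄ := 1, a₆ := 0 }

variable {z : K}

lemma eightTorsionCurve_nonsingular_zero_zero : (eightTorsionCurve z).Nonsingular 0 0 := by
  simp [eightTorsionCurve]

lemma eightTorsionCurve_zero_ne_negY_one_zero (hz : z ≠ 0) (hz1 : z ≠ 1) :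
    (0 : K) ≠ (eightTorsionCurve z).negY 1 0 := by
  intro h
  simp only [negY, eightTorsionCurve] at h
  field_simp at h
  exact hz1 (sub_eq_zero.mp (pow_eq_zero_iff two_ne_zero |>.mp (by linear_combination h)))

lemma eightTorsionCurve_nonsingular_one_zero (hz : z ≠ 0) (hz1 : z ≠ 1) :
    (eightTorsionCurve z).Nonsingular 1 0 :=
  (nonsingular_iff 1 0).mpr ⟨by norm_num [equation_iff, eightTorsionCurve],
    .inr (eightTorsionCurve_zero_ne_negY_one_zero hz hz1)⟩

variable [DecidableEq K]

lemma eightTorsionCurve_two_nsmul_some_z (hz : z ≠ 0) (hz2 : z ^ 2 ≠ 1)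
    {hA : (eightTorsionCurve z).Nonsingular z (z - 1)}
    {h₂ : (eightTorsionCurve z).Nonsingular 1 0} :
    2 • some z (z - 1) hA = some 1 0 h₂ := by
  have hy : z - 1 ≠ (eightTorsionCurve z).negY z (z - 1) := by
    intro h
    simp only [negY, eightTorsionCurve] at h
    field_simp at h
    exact hz2 (by linear_combination h)
  have hslope : (eightTorsionCurve z).slope z z (z - 1) (z - 1) = 2 - z⁻¹ := by
    rw [slope_of_Y_ne rfl hy, div_eq_iff (sub_ne_zero.mpr hy)]
    simp only [negY, eightTorsionCurve]
    field_simp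
    ring
  apply two_nsmul_some_of_Y_ne hy <;> rw [hslope]
  · simp only [addX, eightTorsionCurve]
    field_simp
    ring
  · simp only [addY, negAddY, addX, negY, eightTorsionCurve]
    field_simp
    ring

lemma eightTorsionCurve_two_nsmul_some_one (hz : z ≠ 0) (hz1 : z ≠ 1)
    {h₂ : (eightTorsionCurve z).Nonsingular 1 0}
    {h₄ : (eightTorsionCurve z).Nonsingular 0 0} :
    2 • some 1 0 h₂ = some 0 0 h₄ := by
  have hy := eightTorsionCurve_zero_ne_negY_one_zero hz hz1
  have hslope : (eightTorsionCurve z).slope 1 1 0 0 = 0 := by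
    rw [slope_of_Y_ne rfl hy]
    norm_num [eightTorsionCurve]
  apply two_nsmul_some_of_Y_ne hy <;> rw [hslope]
  · norm_num [eightTorsionCurve]
  · norm_num [addY, negY, eightTorsionCurve]

lemma eightTorsionCurve_two_nsmul_some_zero {h₄ : (eightTorsionCurve z).Nonsingular 0 0} :
    2 • some 0 0 h₄ = 0 :=
  two_nsmul_some_of_Y_eq (by simp [negY, eightTorsionCurve])

variable (hz : z ≠ 0) (hz2 : z ^ 2 ≠ 1) {hA : (eightTorsionCurve z).Nonsingular z (z - 1)}
include hz hz2

lemma eightTorsionCurve_four_nsmul_some_z {h₄ : (eightTorsionCurve z).Nonsingular 0 0} :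
    4 • some z (z - 1) hA = some 0 0 h₄ := by
  have hz1 : z ≠ 1 := by rintro rfl; exact hz2 (one_pow 2)
  have h₂ := eightTorsionCurve_nonsingular_one_zero hz hz1
  rw [show 4 = 2 * 2 from rfl, mul_nsmul, eightTorsionCurve_two_nsmul_some_z hz hz2 (h₂ := h₂),
    eightTorsionCurve_two_nsmul_some_one hz hz1]

lemma eightTorsionCurve_addOrderOf_some_z : addOrderOf (some z (z - 1) hA) = 8 := by
  have h₄ := eightTorsionCurve_nonsingular_zero_zero (z := z)
  refine addOrderOf_eq_prime_pow (p := 2) (n := 2) ?_ ?_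
  · rw [show 2 ^ 2 = 4 from rfl, eightTorsionCurve_four_nsmul_some_z hz hz2 (h₄ := h₄)]
    exact some_ne_zero h₄
  · rw [show 2 ^ (2 + 1) = 4 * 2 from rfl, mul_nsmul,
      eightTorsionCurve_four_nsmul_some_z hz hz2 (h₄ := h₄),
      eightTorsionCurve_two_nsmul_some_zero]

end EightTorsionCurve

open Polynomial in
lemma RatFunc.X_sq_ne_one {K : Type*} [Field K] : (RatFunc.X : RatFunc K) ^ 2 ≠ 1 := by
  rw [Ne, ← sub_eq_zero, ← RatFunc.algebraMap_X, ← map_one (algebraMap K[X] _), ← map_pow,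
    ← map_sub]
  exact RatFunc.algebraMap_ne_zero (by simpa using X_pow_sub_C_ne_zero two_pos (1 : K))

open Classical in
theorem stmt_4
    (hA : E18Curve.Nonsingular RatFunc.X (RatFunc.X - 1))
    (h2 : E18Curve.Nonsingular 1 0)
    (h4 : E18Curve.Nonsingular 0 0) :
    2 • (WeierstrassCurve.Affine.Point.some _ _ hA) = WeierstrassCurve.Affine.Point.some _ _ h2 ∧
    4 • (WeierstrassCurve.Affine.Point.some _ _ hA) = WeierstrassCurve.Affine.Point.some _ _ h4 ∧
    addOrderOf (WeierstrassCurve.Affine.Point.some _ _ hA) = 8 :=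
  ⟨eightTorsionCurve_two_nsmul_some_z RatFunc.X_ne_zero RatFunc.X_sq_ne_one,
    eightTorsionCurve_four_nsmul_some_z RatFunc.X_ne_zero RatFunc.X_sq_ne_one,
    eightTorsionCurve_addOrderOf_some_z RatFunc.X_ne_zero RatFunc.X_sq_ne_one⟩
end

section
/- Let (X, Y, t) be nonzero complex numbers with |X| = |Y| = 1 and (X + 1/X - 2)(Y + 1/Y + 2) + 2i*(t - i)^4/(t^3 - t) = 0 and |t| > 1. Then writing t = u + iv with u, v real, one has 2u*(u^2 + v^2 + 2u - 1)*(u^2 + v^2 - 2u - 1)*(u^2 + v^2 - 1) = 0. -/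
open Complex

/-!
For `‖X‖ = 1` we have `X⁻¹ = conj X`, so `X + X⁻¹` and `Y + Y⁻¹` are real and the equation forces
`2 i (t - i)⁴ / (t³ - t)` to be real. Multiplying by `|t³ - t|²`, the imaginary part of
`2 i (t - i)⁴ · conj (t³ - t)` vanishes, and expanding it in `u = Re t`, `v = Im t` gives the
stated quartic product.
-/

namespace Complex

open ComplexConjugate

lemma im_add_inv_eq_zero_of_norm_eq_one {z : ℂ} (hz : ‖z‖ = 1) : (z + z⁻¹).im = 0 := by
  rw [inv_eq_conj hz, add_conj, ofReal_im]

/-- Holds also for `w = 0`, where both sides vanish thanks to `z / 0 = 0` and `conj 0 = 0`. -/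
lemma mul_conj_eq_div_mul_normSq (z w : ℂ) : z * conj w = z / w * normSq w := by
  rcases eq_or_ne w 0 with rfl | hw
  · simp
  · rw [← mul_conj, ← mul_assoc, div_mul_cancel₀ z hw]

lemma im_mul_conj_eq_zero_of_im_div_eq_zero {z w : ℂ} (h : (z / w).im = 0) :
    (z * conj w).im = 0 := by
  rw [mul_conj_eq_div_mul_normSq, im_mul_ofReal, h, zero_mul]

lemma im_two_mul_I_mul_sub_I_pow_four_mul_conj_cube_sub (t : ℂ) :
    (2 * I * (t - I) ^ 4 * conj (t ^ 3 - t)).im =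
      2 * t.re * (t.re ^ 2 + t.im ^ 2 + 2 * t.re - 1) * (t.re ^ 2 + t.im ^ 2 - 2 * t.re - 1) *
        (t.re ^ 2 + t.im ^ 2 - 1) := by
  simp only [map_sub, mul_im, mul_re, sub_re, sub_im, I_re, I_im, conj_re, conj_im,
    re_ofNat, im_ofNat, pow_succ, pow_zero, one_mul]
  ring

end Complex

theorem stmt_6_general (X Y t : ℂ) (hX : ‖X‖ = 1) (hY : ‖Y‖ = 1)
    (heq : (X + X⁻¹ - 2) * (Y + Y⁻¹ + 2) + 2 * I * (t - I) ^ 4 / (t ^ 3 - t) = 0) :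
    2 * t.re * (t.re ^ 2 + t.im ^ 2 + 2 * t.re - 1) * (t.re ^ 2 + t.im ^ 2 - 2 * t.re - 1) *
      (t.re ^ 2 + t.im ^ 2 - 1) = 0 := by
  have hXreal : (X + X⁻¹ - 2).im = 0 := by
    rw [sub_im, im_add_inv_eq_zero_of_norm_eq_one hX, im_ofNat, sub_zero]
  have hYreal : (Y + Y⁻¹ + 2).im = 0 := by
    rw [add_im, im_add_inv_eq_zero_of_norm_eq_one hY, im_ofNat, add_zero]
  have hreal : (2 * I * (t - I) ^ 4 / (t ^ 3 - t)).im = 0 := by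
    rw [eq_neg_of_add_eq_zero_right heq, neg_im, mul_im, hXreal, hYreal, mul_zero, zero_mul,
      add_zero, neg_zero]
  rw [← im_two_mul_I_mul_sub_I_pow_four_mul_conj_cube_sub,
    im_mul_conj_eq_zero_of_im_div_eq_zero hreal]

theorem stmt_6 (X Y t : ℂ) (hX : ‖X‖ = 1) (hY : ‖Y‖ = 1)
    (ht : 1 < ‖t‖) (ht' : t ^ 3 - t ≠ 0)
    (heq : (X + X⁻¹ - 2) * (Y + Y⁻¹ + 2) + 2 * I * (t - I) ^ 4 / (t ^ 3 - t) = 0) :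
    2 * t.re * (t.re ^ 2 + t.im ^ 2 + 2 * t.re - 1) * (t.re ^ 2 + t.im ^ 2 - 2 * t.re - 1) *
      (t.re ^ 2 + t.im ^ 2 - 1) = 0 :=
  stmt_6_general X Y t hX hY heq
end

section
/- The birational transformation X = (x + y - s + 1)/(x + y), Y = (s-1)(x - y)(x + y - s + 1)/(2(x+y)^2) sends solutions of s = (x+y+1)(1/x + 1/y + 1) to solutions of the Weierstrass equation Y^2 = X^3 + ((s-3)^2 - 12)/4 * X^2 + s*X, whenever x, y ≠ 0 and x + y ≠ 0. -/
/-!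
Clearing denominators, the curve becomes `x y s = (x + y + 1)(x + y + x y)`, and the Weierstrass
equation multiplied by `4 (x + y)⁴` becomes a polynomial identity in `x, y, s` whose difference of
sides is `4 (s - 1)² (x + y - s + 1)` times the cleared curve equation.
-/

lemma mul_mul_eq_of_eq_add_one_mul_inv_add_inv_add_one {K : Type*} [Field K] {x y s : K}
    (hx : x ≠ 0) (hy : y ≠ 0) (h : s = (x + y + 1) * (x⁻¹ + y⁻¹ + 1)) :
    x * y * s = (x + y + 1) * (x + y + x * y) := by
  rw [h]
  field_simp
  ring

lemma sq_eq_of_mul_mul_eq {R : Type*} [CommRing R] {x y s : R}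
    (h : x * y * s = (x + y + 1) * (x + y + x * y)) :
    ((s - 1) * (x - y) * (x + y - s + 1)) ^ 2 =
      4 * (x + y) * (x + y - s + 1) ^ 3 +
        ((s - 3) ^ 2 - 12) * (x + y) ^ 2 * (x + y - s + 1) ^ 2 +
        4 * s * (x + y) ^ 3 * (x + y - s + 1) := by
  linear_combination 4 * (s - 1) ^ 2 * (x + y - s + 1) * h

lemma div_sq_eq_of_sq_eq {K : Type*} [Field K] [NeZero (2 : K)] {u w v a b : K} (hu : u ≠ 0)
    (h : v ^ 2 = 4 * u * w ^ 3 + 4 * a * u ^ 2 * w ^ 2 + 4 * b * u ^ 3 * w) :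
    (v / (2 * u ^ 2)) ^ 2 = (w / u) ^ 3 + a * (w / u) ^ 2 + b * (w / u) := by
  field_simp
  linear_combination h

theorem stmt_10 (x y s : ℂ) (hx : x ≠ 0) (hy : y ≠ 0) (hxy : x + y ≠ 0)
    (heq : s = (x + y + 1) * (x⁻¹ + y⁻¹ + 1)) :
    ((s - 1) * (x - y) * (x + y - s + 1) / (2 * (x + y) ^ 2)) ^ 2 =
      ((x + y - s + 1) / (x + y)) ^ 3 +
        ((s - 3) ^ 2 - 12) / 4 * ((x + y - s + 1) / (x + y)) ^ 2 +
        s * ((x + y - s + 1) / (x + y)) := by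
  apply div_sq_eq_of_sq_eq hxy
  rw [sq_eq_of_mul_mul_eq (mul_mul_eq_of_eq_add_one_mul_inv_add_inv_add_one hx hy heq)]
  ring
end

section
/- On the elliptic curve E_s : Y^2 = X^3 + ((s-3)^2 - 12)/4 * X^2 + s*X over Q(s), the point A = (s, (s^2 - s)/2) is a point of order 6. -/
open WeierstrassCurve

noncomputable def E16Curve : WeierstrassCurve.Affine (RatFunc ℚ) :=
  { a₁ := 0, a₂ := ((RatFunc.X - 3) ^ 2 - 12) / 4, a₃ := 0, a₄ := RatFunc.X, a₆ := 0 }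

/-!
The chord-and-tangent formulas give `2A = (1, (s - 1)/2)` and `3A = 2A + A = (0, 0)`.
The point `(0, 0)` has `Y = 0`, so it is its own negative and `6A = 0`; since `A`, `2A`, `3A`
are affine points, none of them is `0`, so the order is exactly `6`.
-/

lemma four_ne_zero_of_two_ne_zero {R : Type*} [Semiring R] [NoZeroDivisors R]
    (h2 : (2 : R) ≠ 0) : (4 : R) ≠ 0 := by
  rw [show (4 : R) = 2 * 2 by norm_num]
  exact mul_ne_zero h2 h2

lemma addOrderOf_eq_six {G : Type*} [AddMonoid G] {P : G} (h6 : 6 • P = 0) (h2 : 2 • P ≠ 0)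
    (h3 : 3 • P ≠ 0) : addOrderOf P = 6 := by
  refine addOrderOf_eq_of_nsmul_and_div_prime_nsmul (by norm_num) h6 fun p hp hp6 => ?_
  have hp23 : p = 2 ∨ p = 3 := by
    have : p ≤ 6 := Nat.le_of_dvd (by norm_num) hp6
    interval_cases p <;> simp_all +decide
  rcases hp23 with rfl | rfl
  exacts [h3, h2]

lemma RatFunc.X_ne_one {K : Type*} [Field K] : (RatFunc.X : RatFunc K) ≠ 1 := fun h =>
  Polynomial.X_ne_C 1 (RatFunc.algebraMap_injective K (by simpa using h))

namespace WeierstrassCurve.Affine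

variable {F : Type*} [Field F] {s : F}

def sixTorsionCurve (s : F) : Affine F :=
  { a₁ := 0, a₂ := ((s - 3) ^ 2 - 12) / 4, a₃ := 0, a₄ := s, a₆ := 0 }

@[simp]
lemma sixTorsionCurve_negY (x y : F) : (sixTorsionCurve s).negY x y = -y := by
  simp [negY, sixTorsionCurve]

lemma sixTorsionCurve_nonsingular_one (h2 : (2 : F) ≠ 0) (hs1 : s ≠ 1) :
    (sixTorsionCurve s).Nonsingular 1 ((s - 1) / 2) := by
  have h4 := four_ne_zero_of_two_ne_zero h2
  rw [nonsingular_iff', equation_iff']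
  refine ⟨?_, Or.inr ?_⟩
  · simp only [sixTorsionCurve]
    field_simp
    ring
  · simp only [sixTorsionCurve]
    field_simp
    simpa [sub_eq_zero] using hs1

lemma sixTorsionCurve_nonsingular_zero (hs0 : s ≠ 0) :
    (sixTorsionCurve s).Nonsingular 0 0 := by
  rw [nonsingular_iff', equation_iff']
  simpa [sixTorsionCurve] using hs0

variable (h2 : (2 : F) ≠ 0) (hs0 : s ≠ 0) (hs1 : s ≠ 1)
include h2 hs0 hs1

lemma sixTorsionCurve_Y_ne_negY :
    (s ^ 2 - s) / 2 ≠ (sixTorsionCurve s).negY s ((s ^ 2 - s) / 2) := by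
  rw [sixTorsionCurve_negY, ne_eq, eq_neg_iff_add_eq_zero, ← add_div, div_eq_zero_iff, not_or]
  refine ⟨?_, h2⟩
  rw [← two_mul, sq, ← mul_sub_one]
  exact mul_ne_zero h2 (mul_ne_zero hs0 (sub_ne_zero.mpr hs1))

variable [DecidableEq F] {hA : (sixTorsionCurve s).Nonsingular s ((s ^ 2 - s) / 2)}

lemma sixTorsionCurve_slope_self :
    (sixTorsionCurve s).slope s s ((s ^ 2 - s) / 2) ((s ^ 2 - s) / 2) = (s + 1) / 2 := by
  have h4 := four_ne_zero_of_two_ne_zero h2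
  have hy := sixTorsionCurve_Y_ne_negY h2 hs0 hs1
  rw [slope_of_Y_ne rfl hy, div_eq_iff (sub_ne_zero.mpr hy), sixTorsionCurve_negY]
  simp only [sixTorsionCurve]
  field_simp
  ring

lemma two_nsmul_sixTorsionCurve_some :
    2 • Point.some _ _ hA = Point.some _ _ (sixTorsionCurve_nonsingular_one h2 hs1) := by
  have h4 := four_ne_zero_of_two_ne_zero h2
  rw [two_nsmul, Point.add_self_of_Y_ne (sixTorsionCurve_Y_ne_negY h2 hs0 hs1), Point.some.injEq,
    addY, negAddY, addX, sixTorsionCurve_slope_self h2 hs0 hs1, sixTorsionCurve_negY]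
  simp only [sixTorsionCurve]
  constructor <;> field_simp <;> ring

lemma three_nsmul_sixTorsionCurve_some :
    3 • Point.some _ _ hA = Point.some _ _ (sixTorsionCurve_nonsingular_zero hs0) := by
  have h4 := four_ne_zero_of_two_ne_zero h2
  have hx : (1 : F) ≠ s := Ne.symm hs1
  rw [succ_nsmul, two_nsmul_sixTorsionCurve_some h2 hs0 hs1, Point.add_of_X_ne hx,
    Point.some.injEq, addY, negAddY, addX, slope_of_X_ne hx, sixTorsionCurve_negY]
  have : 1 - s ≠ 0 := sub_ne_zero.mpr hx
  simp only [sixTorsionCurve]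
  constructor <;> field_simp <;> ring

theorem addOrderOf_sixTorsionCurve_some : addOrderOf (Point.some _ _ hA) = 6 := by
  refine addOrderOf_eq_six ?_ ?_ ?_
  · rw [show 6 = 3 + 3 from rfl, add_nsmul, three_nsmul_sixTorsionCurve_some h2 hs0 hs1]
    exact Point.add_self_of_Y_eq (by rw [sixTorsionCurve_negY, neg_zero])
  · rw [two_nsmul_sixTorsionCurve_some h2 hs0 hs1]
    exact Point.some_ne_zero _
  · rw [three_nsmul_sixTorsionCurve_some h2 hs0 hs1]
    exact Point.some_ne_zero _

end WeierstrassCurve.Affine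

open Classical in
theorem stmt_11
    (hA : E16Curve.Nonsingular RatFunc.X ((RatFunc.X ^ 2 - RatFunc.X) / 2)) :
    addOrderOf (WeierstrassCurve.Affine.Point.some _ _ hA) = 6 :=
  Affine.addOrderOf_sixTorsionCurve_some two_ne_zero RatFunc.X_ne_zero RatFunc.X_ne_one
end

section
/- The polynomial X^2 + ((s-3)^2 - 12)/4 * X + s in X splits over Q(t) after the substitution s = 2(t + 1/t) + 5; equivalently, the discriminant (s^4 - 12s^3 + 30s^2 - 28s + 9)/16 = (s-9)(s-1)^3/16 becomes a square in Q(t) under this substitution. -/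
/-! With `s = 2 (t + t⁻¹) + 5` both factors are perfect squares up to the common factor `2 / t`:
`s - 9 = 2 (t - 1)² / t` and `s - 1 = 2 (t + 1)² / t`, so the product `(s - 9)(s - 1)³ / 16` equals
`((t - 1)(t + 1)³ / t²)²`. -/

section

variable {K : Type*} [Field K] {t : K}

lemma two_mul_add_inv_add_five_sub_nine (ht : t ≠ 0) :
    2 * (t + t⁻¹) + 5 - 9 = 2 * (t - 1) ^ 2 / t := by
  field_simp
  ring

lemma two_mul_add_inv_add_five_sub_one (ht : t ≠ 0) :
    2 * (t + t⁻¹) + 5 - 1 = 2 * (t + 1) ^ 2 / t := by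
  field_simp
  ring

lemma sub_nine_mul_sub_one_pow_three_div_sixteen_eq_sq (ht : t ≠ 0) (h2 : (2 : K) ≠ 0) :
    ((2 * (t + t⁻¹) + 5 - 9) * (2 * (t + t⁻¹) + 5 - 1) ^ 3) / 16 =
      ((t - 1) * (t + 1) ^ 3 / t ^ 2) ^ 2 := by
  have h16 : (16 : K) = 2 ^ 4 := by norm_num
  rw [two_mul_add_inv_add_five_sub_nine ht, two_mul_add_inv_add_five_sub_one ht, h16]
  field_simp

end

theorem stmt_12 :
    ∃ f : RatFunc ℚ,
      ((2 * (RatFunc.X + RatFunc.X⁻¹) + 5 - 9) *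
          (2 * (RatFunc.X + RatFunc.X⁻¹) + 5 - 1) ^ 3) / 16 = f ^ 2 :=
  ⟨_, sub_nine_mul_sub_one_pow_three_div_sixteen_eq_sq RatFunc.X_ne_zero two_ne_zero⟩
end

section
/- Let x, y, t be nonzero complex numbers with |x| = |y| = 1, |t| > 1, and 2(t + 1/t) + 5 = (x + y + 1)(1/x + 1/y + 1). Then t is real and t ∈ [-2, -1). -/
/-! Since `x⁻¹ = conj x` and `y⁻¹ = conj y`, the right-hand side is `‖x + y + 1‖ ^ 2 ∈ [0, 9]`.
In particular `t + t⁻¹` is real, which for `‖t‖ ≠ 1` forces `t` to be real; and a real `t` with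
`|t| > 1` and `2 (t + t⁻¹) + 5 ∈ [0, 9]` lies in `[-2, -1)`. -/

namespace Complex

theorem add_add_one_mul_inv_add_inv_add_one {x y : ℂ} (hx : ‖x‖ = 1) (hy : ‖y‖ = 1) :
    (x + y + 1) * (x⁻¹ + y⁻¹ + 1) = ((‖x + y + 1‖ ^ 2 : ℝ) : ℂ) := by
  rw [ofReal_pow, inv_eq_conj hx, inv_eq_conj hy, ← mul_conj', map_add, map_add, map_one]

theorem norm_add_add_one_le_three {x y : ℂ} (hx : ‖x‖ = 1) (hy : ‖y‖ = 1) :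
    ‖x + y + 1‖ ≤ 3 :=
  calc ‖x + y + 1‖ ≤ ‖x‖ + ‖y‖ + ‖(1 : ℂ)‖ := norm_add₃_le
    _ = 3 := by rw [hx, hy, norm_one]; norm_num

theorem im_eq_zero_of_im_add_inv_eq_zero_s14 {t : ℂ} (ht : ‖t‖ ≠ 1) (h : (t + t⁻¹).im = 0) :
    t.im = 0 := by
  have hn : (normSq t)⁻¹ ≠ 1 := by
    rwa [inv_ne_one, normSq_eq_norm_sq, Ne, pow_eq_one_iff_of_nonneg (norm_nonneg t) two_ne_zero]
  have hfactor : (t + t⁻¹).im = t.im * (1 - (normSq t)⁻¹) := by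
    rw [add_im, inv_im]; ring
  rw [hfactor, mul_eq_zero, sub_eq_zero] at h
  exact h.resolve_right (Ne.symm hn)

end Complex

theorem mem_Ico_of_two_mul_add_inv_add_five_mem_Icc {a : ℝ} (ha : 1 < |a|)
    (h : 2 * (a + a⁻¹) + 5 ∈ Set.Icc (0 : ℝ) 9) : a ∈ Set.Ico (-2) (-1) := by
  obtain ⟨h0, h9⟩ := h
  rcases lt_abs.mp ha with hpos | hneg
  · have : a⁻¹ > 0 := by positivity
    nlinarith [mul_inv_cancel₀ (by positivity : a ≠ 0)]
  · have hinv : a * a⁻¹ = 1 := mul_inv_cancel₀ (by linarith)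
    constructor <;> nlinarith

theorem stmt_14_general (x y t : ℂ) (hx : ‖x‖ = 1) (hy : ‖y‖ = 1)
    (ht : 1 < ‖t‖)
    (heq : 2 * (t + t⁻¹) + 5 = (x + y + 1) * (x⁻¹ + y⁻¹ + 1)) :
    t.im = 0 ∧ t.re ∈ Set.Ico (-2 : ℝ) (-1) := by
  rw [Complex.add_add_one_mul_inv_add_inv_add_one hx hy] at heq
  have him : t.im = 0 := by
    refine Complex.im_eq_zero_of_im_add_inv_eq_zero_s14 ht.ne' ?_
    have := congrArg Complex.im heq
    rw [Complex.ofReal_im] at this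
    simpa using this
  have ht_real : t = (t.re : ℂ) := Complex.ext rfl (by simp [him])
  rw [ht_real] at heq ht
  have hre : 2 * (t.re + t.re⁻¹) + 5 = ‖x + y + 1‖ ^ 2 := by exact_mod_cast heq
  refine ⟨him, mem_Ico_of_two_mul_add_inv_add_five_mem_Icc (by simpa using ht) ?_⟩
  rw [hre]
  exact ⟨sq_nonneg _, by nlinarith [norm_nonneg (x + y + 1),
    Complex.norm_add_add_one_le_three hx hy]⟩

theorem stmt_14 (x y t : ℂ) (hx : ‖x‖ = 1) (hy : ‖y‖ = 1)
    (ht : 1 < ‖t‖) (ht0 : t ≠ 0)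
    (heq : 2 * (t + t⁻¹) + 5 = (x + y + 1) * (x⁻¹ + y⁻¹ + 1)) :
    t.im = 0 ∧ t.re ∈ Set.Ico (-2 : ℝ) (-1) :=
  stmt_14_general x y t hx hy ht heq
end

section
/- Let x, y be complex numbers on the unit circle and Z a complex number with |Z| > 1 such that (x-1)^2*(y-1)^2 = ((Z-1)^4/Z^2)*x*y. Then Z is real and Z ∈ (1, 3 + 2*sqrt(2)]. -/
/-!
On the unit circle `(x - 1)^2 / x = 2 Re x - 2 ∈ [-4, 0]`, so the hypothesis becomes
`((Z - 1)^2 / Z)^2 = c` with `c ∈ [0, 16]`. Hence `Z + 1/Z - 2 = (Z - 1)^2 / Z = b` is real with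
`|b| ≤ 4`. If `Z + 1/Z` is real and `|Z| ≠ 1`, then `Z` is real; for real `Z` with `|Z| > 1`,
the bound `-2 ≤ Z + 1/Z ≤ 6` forces `1 < Z ≤ 3 + 2√2`.
-/

open Complex ComplexConjugate

namespace Complex

theorem sq_sub_one_eq_ofReal_mul_of_norm_eq_one {x : ℂ} (hx : ‖x‖ = 1) :
    (x - 1) ^ 2 = ((2 * x.re - 2 : ℝ) : ℂ) * x := by
  have hconj : x * conj x = 1 := by rw [mul_conj', hx]; norm_num
  have hre : x + conj x = ((2 * x.re : ℝ) : ℂ) := add_conj x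
  push_cast at hre ⊢
  linear_combination x * hre - hconj

theorem exists_real_eq_mul_of_sq_eq_ofReal_mul_sq {w v : ℂ} {c : ℝ} (hc : 0 ≤ c)
    (h : w ^ 2 = c * v ^ 2) : ∃ b : ℝ, b ^ 2 = c ∧ w = b * v := by
  have hsqrt : ((√c : ℝ) : ℂ) ^ 2 = c := by norm_cast; exact Real.sq_sqrt hc
  have hfac : (w - √c * v) * (w + √c * v) = 0 := by linear_combination h - v ^ 2 * hsqrt
  rcases mul_eq_zero.mp hfac with h | h
  · exact ⟨√c, Real.sq_sqrt hc, by linear_combination h⟩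
  · exact ⟨-√c, by rw [neg_sq, Real.sq_sqrt hc], by push_cast; linear_combination h⟩

/-- Off the unit circle, `Z + 1/Z` is real only for real `Z`. -/
theorem im_eq_zero_of_sq_add_one_eq_ofReal_mul {Z : ℂ} {a : ℝ} (hZ : ‖Z‖ ≠ 1)
    (h : Z ^ 2 + 1 = a * Z) : Z.im = 0 := by
  have hre := congrArg re h
  have him := congrArg im h
  simp only [pow_two, add_re, add_im, mul_re, mul_im, ofReal_re, ofReal_im, one_re, one_im]
    at hre him
  by_contra hne
  have ha : a = 2 * Z.re := by
    have : Z.im * (2 * Z.re - a) = 0 := by linear_combination him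
    linarith [(mul_eq_zero.mp this).resolve_left hne]
  apply hZ
  rw [← pow_eq_one_iff_of_nonneg (norm_nonneg Z) two_ne_zero, Complex.sq_norm, normSq_apply]
  subst ha
  linear_combination -hre

end Complex

theorem Real.mem_Ioc_of_sq_add_one_eq_mul {t a : ℝ} (ht : 1 < |t|) (ha : a ∈ Set.Icc (-2) 6)
    (h : t ^ 2 + 1 = a * t) : t ∈ Set.Ioc 1 (3 + 2 * √2) := by
  obtain ⟨ha₁, ha₂⟩ := ha
  have ht₁ : 1 < t := by
    rcases lt_abs.mp ht with ht | ht
    · exact ht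
    · nlinarith [sq_nonneg (t + 1)]
  have hsqrt : √2 ^ 2 = 2 := Real.sq_sqrt zero_le_two
  refine ⟨ht₁, ?_⟩
  nlinarith [Real.sqrt_nonneg 2, sq_nonneg (t - 3 + 2 * √2)]

theorem stmt_16 (x y Z : ℂ) (hx : ‖x‖ = 1) (hy : ‖y‖ = 1)
    (hZ : 1 < ‖Z‖)
    (heq : (x - 1) ^ 2 * (y - 1) ^ 2 * Z ^ 2 = (Z - 1) ^ 4 * x * y) :
    Z.im = 0 ∧ Z.re ∈ Set.Ioc (1 : ℝ) (3 + 2 * Real.sqrt 2) := by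
  have hxy : x * y ≠ 0 := mul_ne_zero (norm_ne_zero_iff.mp (by simp [hx]))
    (norm_ne_zero_iff.mp (by simp [hy]))
  have hquartic : ((Z - 1) ^ 2) ^ 2 = ((2 * x.re - 2) * (2 * y.re - 2) : ℝ) * Z ^ 2 := by
    refine mul_right_cancel₀ hxy ?_
    rw [sq_sub_one_eq_ofReal_mul_of_norm_eq_one hx, sq_sub_one_eq_ofReal_mul_of_norm_eq_one hy]
      at heq
    push_cast at heq ⊢
    linear_combination -heq
  obtain ⟨hx₁, hx₂⟩ := abs_le.mp (hx ▸ abs_re_le_norm x)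
  obtain ⟨hy₁, hy₂⟩ := abs_le.mp (hy ▸ abs_re_le_norm y)
  obtain ⟨b, hbc, hb⟩ := exists_real_eq_mul_of_sq_eq_ofReal_mul_sq (by nlinarith) hquartic
  have hrec : Z ^ 2 + 1 = ((2 + b : ℝ) : ℂ) * Z := by push_cast; linear_combination hb
  have him : Z.im = 0 := im_eq_zero_of_sq_add_one_eq_ofReal_mul hZ.ne' hrec
  have hZre : Z = Z.re := ext rfl him
  refine ⟨him, Real.mem_Ioc_of_sq_add_one_eq_mul (a := 2 + b)
    (by rwa [hZre, norm_real] at hZ) ?_ ?_⟩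
  · constructor <;> nlinarith
  · exact_mod_cast hZre ▸ hrec
end
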